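/- Let N ≥ 2, let {C_1,…,C_t} be a partition of the index set {0,…,N−1}, and let L be an N×N real symmetric matrix whose kernel is exactly the span of the indicator vectors 1_{C_1},…,1_{C_t} (as holds for the graph Laplacian of a weighted undirected graph with connected components C_1,…,C_t). Let Λ ⊆ {0,…,N−1} be such that its complement Λᶜ intersects every block C_k. Then the space {x ∈ ℝ^N : (L·x)_i = 0 for all i ∈ Λ} has dimension exactly |Λᶜ| = N − |Λ|. -/

import Mathlib

open Matrix Function

/-!
The subspace is the kernel of the submatrix of `L` formed by the rows indexed by `Λ`, so by
rank–nullity it suffices that these rows are linearly independent. A linear relation among them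
is a vector `v` supported on `Λ` with `vᵀ L = 0`, i.e. (by symmetry) `v ∈ ker L`, so `v` is
constant on each block `C k`; as every block meets the complement of `Λ`, where `v` vanishes,
`v = 0`.
-/

section Indicator

variable {ι α R : Type*} [Fintype ι] [DecidableEq α] [Semiring R] {C : ι → Finset α}

theorem sum_smul_indicator_apply_of_mem (hC : Pairwise (Disjoint on C)) (c : ι → R)
    {i : α} {k : ι} (hi : i ∈ C k) :
    (∑ l, c l • fun j => if j ∈ C l then (1 : R) else 0) i = c k := by
  rw [Finset.sum_apply, Finset.sum_eq_single k]
  · simp [hi]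
  · intro l _ hlk
    simp [Finset.disjoint_left.mp (hC hlk.symm) hi]
  · simp

theorem eq_zero_of_eq_sum_smul_indicator (hC : Pairwise (Disjoint on C)) {x : α → R}
    {c : ι → R} (hx : x = ∑ k, c k • fun j => if j ∈ C k then (1 : R) else 0)
    (hzero : ∀ k, ∃ i ∈ C k, x i = 0) : x = 0 := by
  have hc : c = 0 := by
    ext k
    obtain ⟨i, hi, hxi⟩ := hzero k
    rw [← sum_smul_indicator_apply_of_mem hC c hi, ← hx, hxi, Pi.zero_apply]
  simp [hx, hc]

end Indicator

section RowSubmatrix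

variable {m n K : Type*} [Field K]

theorem iInf_ker_proj_comp_mulVecLin [Fintype n] (A : Matrix m n K) (s : Finset m) :
    ⨅ i ∈ s, LinearMap.ker ((LinearMap.proj i : (m → K) →ₗ[K] K) ∘ₗ A.mulVecLin) =
      LinearMap.ker (A.submatrix ((↑) : s → m) id).mulVecLin := by
  ext x
  simp only [Submodule.mem_iInf, LinearMap.mem_ker, LinearMap.comp_apply,
    LinearMap.proj_apply, mulVecLin_apply, funext_iff, Subtype.forall, Pi.zero_apply]
  rfl

theorem finrank_ker_mulVecLin_add_rank [Fintype n] (A : Matrix m n K) :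
    Module.finrank K (LinearMap.ker A.mulVecLin) + A.rank = Fintype.card n := by
  rw [add_comm, rank, LinearMap.finrank_range_add_finrank_ker, Module.finrank_fintype_fun_eq_card]

theorem linearIndependent_row_submatrix [Fintype m] [DecidableEq m] {A : Matrix m n K}
    {s : Finset m} (h : ∀ v : m → K, v ᵥ* A = 0 → (∀ i ∉ s, v i = 0) → v = 0) :
    LinearIndependent K (A.submatrix ((↑) : s → m) id).row := by
  rw [Fintype.linearIndependent_iff]
  intro g hg i
  set v : m → K := fun j => if hj : j ∈ s then g ⟨j, hj⟩ else 0
  have hv : v ᵥ* A = 0 := by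
    rw [vecMul_eq_sum, ← Finset.sum_subset (Finset.subset_univ s) (fun j _ hj => by simp [v, hj]),
      ← Finset.sum_coe_sort, ← hg]
    exact Finset.sum_congr rfl fun j _ => by simp [v, j.2]; rfl
  have := congrFun (h v hv fun j hj => by simp [v, hj]) i
  simpa [v, i.2] using this

end RowSubmatrix

theorem analysis_subspace_dim_disconnected_laplacian_general
    (N t : ℕ)
    (C : Fin t → Finset (Fin N))
    (hCdisj : ∀ k l, k ≠ l → Disjoint (C k) (C l))
    (L : Matrix (Fin N) (Fin N) ℝ)
    (hLsymm : L.IsSymm)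
    (hker : ∀ x : Fin N → ℝ, L.mulVec x = 0 ↔
      ∃ c : Fin t → ℝ, x = ∑ k, c k • (fun i => if i ∈ C k then (1 : ℝ) else 0))
    (Λ : Finset (Fin N)) (hΛ : ∀ k, ∃ i ∈ C k, i ∉ Λ) :
    Module.finrank ℝ
      ↥(⨅ i ∈ Λ, LinearMap.ker
          ((LinearMap.proj i : (Fin N → ℝ) →ₗ[ℝ] ℝ) ∘ₗ L.mulVecLin)) = N - Λ.card := by
  have hrows : LinearIndependent ℝ (L.submatrix ((↑) : Λ → Fin N) id).row := by
    refine linearIndependent_row_submatrix fun v hv hvΛ => ?_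
    rw [← hLsymm.eq, vecMul_transpose] at hv
    obtain ⟨c, hc⟩ := (hker v).mp hv
    refine eq_zero_of_eq_sum_smul_indicator (fun k l => hCdisj k l) hc fun k => ?_
    obtain ⟨i, hiC, hiΛ⟩ := hΛ k
    exact ⟨i, hiC, hvΛ i hiΛ⟩
  have hsum := finrank_ker_mulVecLin_add_rank (L.submatrix ((↑) : Λ → Fin N) id)
  rw [hrows.rank_matrix, Fintype.card_coe, Fintype.card_fin] at hsum
  rw [iInf_ker_proj_comp_mulVecLin]
  omega

/-- Let `L` be a symmetric matrix whose kernel is exactly the span of the indicator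
vectors of the blocks `C 1, …, C t` of a partition of the index set (the Laplacian of a
graph with connected components `C k`). If the complement of `Λ` intersects every block,
then the cosparse analysis subspace `{x : (L x)_i = 0 for i ∈ Λ}` has dimension exactly
`N - |Λ|`. -/
theorem analysis_subspace_dim_disconnected_laplacian
    (N t : ℕ) (hN : 2 ≤ N)
    (C : Fin t → Finset (Fin N))
    (hCne : ∀ k, (C k).Nonempty)
    (hCdisj : ∀ k l, k ≠ l → Disjoint (C k) (C l))
    (hCcover : ∀ i : Fin N, ∃ k, i ∈ C k)
    (L : Matrix (Fin N) (Fin N) ℝ)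
    (hLsymm : L.IsSymm)
    (hker : ∀ x : Fin N → ℝ, L.mulVec x = 0 ↔
      ∃ c : Fin t → ℝ, x = ∑ k, c k • (fun i => if i ∈ C k then (1 : ℝ) else 0))
    (Λ : Finset (Fin N)) (hΛ : ∀ k, ∃ i ∈ C k, i ∉ Λ) :
    Module.finrank ℝ
      ↥(⨅ i ∈ Λ, LinearMap.ker
          ((LinearMap.proj i : (Fin N → ℝ) →ₗ[ℝ] ℝ) ∘ₗ L.mulVecLin)) = N - Λ.card :=
  analysis_subspace_dim_disconnected_laplacian_general N t C hCdisj L hLsymm hker Λ hΛ
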